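/- For every z > 0 one has Γ_ILW(z) = 1 − 2z² − cosh(2z) + 2z·sinh(2z) > 0. -/

import Mathlib

/-- The sign factor `Γ_ILW(z) = 1 − 2z² − cosh(2z) + 2z sinh(2z)` of the modulational
instability index for the intermediate long-wave equation is positive for `z > 0`. -/
theorem GammaILW_pos (z : ℝ) (hz : 0 < z) :
    0 < 1 - 2 * z ^ 2 - Real.cosh (2 * z) + 2 * z * Real.sinh (2 * z) := by
  set f : ℝ → ℝ := fun x => 1 - 2 * x ^ 2 - Real.cosh (2 * x) + 2 * x * Real.sinh (2 * x)
    with hf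
  have hderiv : ∀ x : ℝ, HasDerivAt f (4 * x * Real.cosh (2 * x) - 4 * x) x := by
    intro x
    have h1 : HasDerivAt (fun x : ℝ => 2 * x) 2 x := by
      simpa using (hasDerivAt_id x).const_mul 2
    have hcosh : HasDerivAt (fun x : ℝ => Real.cosh (2 * x)) (Real.sinh (2 * x) * 2) x :=
      (Real.hasDerivAt_cosh (2 * x)).comp x h1
    have hsinh : HasDerivAt (fun x : ℝ => Real.sinh (2 * x)) (Real.cosh (2 * x) * 2) x :=
      (Real.hasDerivAt_sinh (2 * x)).comp x h1
    have hsq : HasDerivAt (fun x : ℝ => 2 * x ^ 2) (2 * (2 * x)) x := by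
      simpa using (hasDerivAt_pow 2 x).const_mul 2
    have hprod : HasDerivAt (fun x : ℝ => 2 * x * Real.sinh (2 * x))
        (2 * Real.sinh (2 * x) + 2 * x * (Real.cosh (2 * x) * 2)) x :=
      h1.mul hsinh
    have := (((hasDerivAt_const x (1 : ℝ)).sub hsq).sub hcosh).add hprod
    refine HasDerivAt.congr_deriv this ?_
    ring
  have hmono : StrictMonoOn f (Set.Ici 0) := by
    apply strictMonoOn_of_deriv_pos (convex_Ici 0)
    · exact fun x _ => ((hderiv x).continuousAt).continuousWithinAt
    · intro x hx
      rw [interior_Ici] at hx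
      rw [(hderiv x).deriv]
      have hx' : (0 : ℝ) < x := hx
      have hc : 1 < Real.cosh (2 * x) := by
        rw [Real.one_lt_cosh]
        positivity
      nlinarith
  have h0 : f 0 = 0 := by simp [hf]
  have := hmono (Set.self_mem_Ici) (Set.mem_Ici.2 hz.le) hz
  rw [h0] at this
  exact this
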